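/- Let 0 < θ₁ ≤ θ₂, w₁ = (2θ₂ − θ₁)/θ₂, w₂ = (θ₂ − θ₁)/θ₂, and define the MSReLU function ξ(z) = w₁(ReLU(z − θ₁) − ReLU(−z − θ₁)) − w₂(ReLU(z − θ₂) − ReLU(−z − θ₂)). Then ξ is monotone nondecreasing on ℝ. -/

import Mathlib

/-- The soft-thresholding map `z ↦ sign z · max (|z| - θ) 0`. -/
noncomputable def softThreshold (θ z : ℝ) : ℝ :=
  max (z - θ) 0 - max (-z - θ) 0

theorem monotone_softThreshold (θ : ℝ) : Monotone (softThreshold θ) := fun x y hxy =>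
  sub_le_sub (max_le_max_right 0 (by linarith)) (max_le_max_right 0 (by linarith))

/-- For `a ≤ b` this is the ramp rising from `0` at `a` to `b - a` at `b`. -/
theorem monotone_max_sub_sub_max_sub {a b : ℝ} (hab : a ≤ b) :
    Monotone fun z : ℝ => max (z - a) 0 - max (z - b) 0 := by
  intro x y hxy
  simp only [max_def]
  split_ifs <;> linarith

theorem monotone_softThreshold_sub_softThreshold {θ₁ θ₂ : ℝ} (h : θ₁ ≤ θ₂) :
    Monotone fun z => softThreshold θ₁ z - softThreshold θ₂ z := by
  intro x y hxy
  -- The difference is `r z - r (-z)` for the ramp `r` above.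
  have hpos := monotone_max_sub_sub_max_sub h hxy
  have hneg := monotone_max_sub_sub_max_sub h (neg_le_neg hxy)
  simp only [softThreshold] at hpos hneg ⊢
  linarith

/-- The MSReLU function is monotone nondecreasing on ℝ. -/
theorem stmt17 (θ₁ θ₂ : ℝ) (h1 : 0 < θ₁) (h2 : θ₁ ≤ θ₂)
    (w₁ w₂ : ℝ) (hw1 : w₁ = (2 * θ₂ - θ₁) / θ₂) (hw2 : w₂ = (θ₂ - θ₁) / θ₂)
    (ξ : ℝ → ℝ)
    (hξ : ∀ z, ξ z = w₁ * (max (z - θ₁) 0 - max (-z - θ₁) 0)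
      - w₂ * (max (z - θ₂) 0 - max (-z - θ₂) 0)) :
    Monotone ξ := by
  have hθ₂ : 0 < θ₂ := h1.trans_le h2
  have hw₂ : 0 ≤ w₂ := hw2 ▸ div_nonneg (sub_nonneg.mpr h2) hθ₂.le
  have hw₁ : w₁ = 1 + w₂ := by
    rw [hw1, hw2]
    field_simp
    ring
  have hdecomp : ξ = fun z =>
      softThreshold θ₁ z + w₂ * (softThreshold θ₁ z - softThreshold θ₂ z) := by
    funext z
    rw [hξ, hw₁]
    simp only [softThreshold]
    ring
  rw [hdecomp]
  exact (monotone_softThreshold θ₁).add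
    ((monotone_softThreshold_sub_softThreshold h2).const_mul hw₂)
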